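/- arXiv:1510.07358 — 5 statements merged into one kernel-verified Lean document; each statement's English description precedes it below -/
import Mathlib

section
/- For every real α ≥ (5+4√2)/7, the inequality 1/2 + 1/(2(α-1)) + (α-1)/8 ≤ α holds. -/
theorem stmt_0 (α : ℝ) (h : α ≥ (5 + 4 * Real.sqrt 2) / 7) :
    1/2 + 1/(2*(α-1)) + (α-1)/8 ≤ α := by
  have hs : Real.sqrt 2 ^ 2 = 2 := Real.sq_sqrt (by norm_num)
  have hs' : Real.sqrt 2 ≥ 0 := Real.sqrt_nonneg 2
  have h1 : α - 1 > 0 := by nlinarith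
  have h2 : 1/(2*(α-1)) ≤ α - 1/2 - (α-1)/8 := by
    rw [div_le_iff₀ (by linarith : 0 < 2*(α-1))]
    nlinarith [sq_nonneg (7*α - 5 - 4*Real.sqrt 2), mul_nonneg (sub_nonneg.mpr h) (sub_nonneg.mpr h)]
  linarith
end

section
/- Let φ = (1+√5)/2. If p, p' ∈ [0,1] are reals satisfying p ≥ (φ/r - 1)/(φ - 1), p' ≤ (2 - 2/r)/(2 - φ), and p'(φ-1) + 1 - pφ ≥ 0 for some real r > 1, then r ≥ (5√5 - 9)/2. -/
/-!
Since `φ - 1 = φ⁻¹` and `2 - φ = φ⁻²`, the hypotheses read `p ≥ φ²/r - φ`, `p' ≤ φ²(2 - 2/r)` and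
`pφ ≤ p'(φ - 1) + 1`. Chaining them and using `φ²(φ - 1) = φ` gives `φ³/r - φ² ≤ φ(2 - 2/r) + 1`,
i.e. `φ(φ² + 2) ≤ (φ + 1)² r = φ⁴ r`, so `r ≥ (φ + 3)/φ³`, and `(φ + 3)/φ³ = (5√5 - 9)/2` because `φ³ = 2 + √5`.
-/

open Real goldenRatio

namespace Real

theorem goldenRatio_sub_one : φ - 1 = φ⁻¹ := by
  rw [inv_goldenRatio, ← one_sub_goldenConj]
  ring

theorem two_sub_goldenRatio : 2 - φ = φ⁻¹ ^ 2 := by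
  rw [← goldenRatio_sub_one]
  linear_combination -goldenRatio_sq

theorem goldenRatio_pow_three : φ ^ 3 = 2 + √5 := by
  linear_combination (φ + 1) * goldenRatio_sq

theorem goldenRatio_add_three_eq : φ + 3 = φ ^ 3 * ((5 * √5 - 9) / 2) := by
  rw [goldenRatio_pow_three]
  linear_combination (-(5 : ℝ) / 2) * sq_sqrt (show (0 : ℝ) ≤ 5 by norm_num)

theorem goldenRatio_add_three_le_pow_three_mul {p p' r : ℝ} (hr : 0 < r)
    (h1 : (φ / r - 1) / (φ - 1) ≤ p) (h2 : p' ≤ (2 - 2 / r) / (2 - φ))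
    (h3 : 0 ≤ p' * (φ - 1) + 1 - p * φ) : φ + 3 ≤ φ ^ 3 * r := by
  rw [goldenRatio_sub_one, div_inv_eq_mul] at h1
  rw [two_sub_goldenRatio, div_eq_mul_inv, inv_pow, inv_inv] at h2
  have hφ := goldenRatio_pos
  have hφ1 : 0 ≤ φ - 1 := sub_nonneg.2 one_lt_goldenRatio.le
  have hsq := goldenRatio_sq
  have hrr : r * r⁻¹ = 1 := mul_inv_cancel₀ hr.ne'
  -- `φ` is reducible to `(1 + √5) / 2`, which `ring` would otherwise unfold
  generalize φ = x at *
  have hchain : (x / r - 1) * x * x ≤ (2 - 2 / r) * x ^ 2 * (x - 1) + 1 :=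
    calc (x / r - 1) * x * x ≤ p * x := by gcongr
      _ ≤ p' * (x - 1) + 1 := by linarith
      _ ≤ (2 - 2 / r) * x ^ 2 * (x - 1) + 1 := by gcongr
  have hcleared : x * (x ^ 2 + 2) ≤ (x + 1) ^ 2 * r := by
    linear_combination r * hchain - (x ^ 3 + 2 * x) * hrr + 2 * (r - r * r⁻¹) * x * hsq
  linear_combination (x - 1) * hcleared + (r - x ^ 2 - 3) * hsq

end Real

theorem stmt_5_general (p p' r : ℝ)
    (hr : 1 < r)
    (h1 : p ≥ (((1 + Real.sqrt 5)/2) / r - 1) / ((1 + Real.sqrt 5)/2 - 1))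
    (h2 : p' ≤ (2 - 2/r) / (2 - (1 + Real.sqrt 5)/2))
    (h3 : p' * ((1 + Real.sqrt 5)/2 - 1) + 1 - p * ((1 + Real.sqrt 5)/2) ≥ 0) :
    r ≥ (5 * Real.sqrt 5 - 9) / 2 := by
  have hbound := goldenRatio_add_three_le_pow_three_mul (zero_lt_one.trans hr) h1 h2 h3
  rw [goldenRatio_add_three_eq] at hbound
  exact le_of_mul_le_mul_left hbound (pow_pos goldenRatio_pos 3)

theorem stmt_5 (p p' r : ℝ) (hp0 : 0 ≤ p) (hp1 : p ≤ 1) (hp'0 : 0 ≤ p') (hp'1 : p' ≤ 1)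
    (hr : 1 < r)
    (h1 : p ≥ (((1 + Real.sqrt 5)/2) / r - 1) / ((1 + Real.sqrt 5)/2 - 1))
    (h2 : p' ≤ (2 - 2/r) / (2 - (1 + Real.sqrt 5)/2))
    (h3 : p' * ((1 + Real.sqrt 5)/2 - 1) + 1 - p * ((1 + Real.sqrt 5)/2) ≥ 0) :
    r ≥ (5 * Real.sqrt 5 - 9) / 2 :=
  stmt_5_general p p' r hr h1 h2 h3
end

section
/- For every real t with 1 ≤ t < 2 and every integer M ≥ 2, if p ∈ [0,1] satisfies p·M + (1-p) ≥ M/t and p·(1/M) + (1-p) ≥ 1/t, then 1 + 1/M ≥ 2/t. Consequently, for t < 2 there exists M such that no such p exists. -/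
theorem stmt_9 (t : ℝ) (ht1 : 1 ≤ t) (ht2 : t < 2) :
    (∀ M : ℕ, 2 ≤ M → ∀ p : ℝ, 0 ≤ p → p ≤ 1 →
      p * M + (1 - p) ≥ (M : ℝ) / t → p * (1/(M : ℝ)) + (1 - p) ≥ 1/t →
      1 + 1/(M : ℝ) ≥ 2/t) ∧
    (∃ M : ℕ, 2 ≤ M ∧ ¬ ∃ p : ℝ, 0 ≤ p ∧ p ≤ 1 ∧
      p * M + (1 - p) ≥ (M : ℝ) / t ∧ p * (1/(M : ℝ)) + (1 - p) ≥ 1/t) := by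
  have ht0 : (0:ℝ) < t := lt_of_lt_of_le one_pos ht1
  have key : ∀ M : ℕ, 2 ≤ M → ∀ p : ℝ, 0 ≤ p → p ≤ 1 →
      p * M + (1 - p) ≥ (M : ℝ) / t → p * (1/(M : ℝ)) + (1 - p) ≥ 1/t →
      1 + 1/(M : ℝ) ≥ 2/t := by
    intro M hM p hp0 hp1 h1 h2
    have hM0 : (0:ℝ) < M := by positivity
    rw [ge_iff_le, div_le_iff₀ ht0] at h1 ⊢
    rw [ge_iff_le, div_le_iff₀ ht0] at h2
    have e1 : p * (1/(M:ℝ)) * M = p := by field_simp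
    have e2 : (1 + 1/(M:ℝ)) * M = M + 1 := by field_simp
    nlinarith [mul_le_mul_of_nonneg_right h2 hM0.le, h1, mul_pos hM0 ht0]
  refine ⟨key, ?_⟩
  set M : ℕ := ⌈t / (2 - t)⌉₊ + 2 with hMdef
  have hM2 : 2 ≤ M := by omega
  refine ⟨M, hM2, ?_⟩
  rintro ⟨p, hp0, hp1, h1, h2⟩
  have := key M hM2 p hp0 hp1 h1 h2
  have hM0 : (0:ℝ) < M := by positivity
  have hMgt : t / (2 - t) < (M:ℝ) := by
    have h := Nat.le_ceil (t / (2 - t))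
    have : ((⌈t / (2 - t)⌉₊ : ℝ)) < (M:ℝ) := by
      rw [hMdef]; push_cast; linarith
    linarith
  have h2t : (0:ℝ) < 2 - t := by linarith
  rw [div_lt_iff₀ h2t] at hMgt
  rw [ge_iff_le, div_le_iff₀ ht0] at this
  have e2 : (1 + 1/(M:ℝ)) * t = t + t/M := by ring
  rw [e2] at this
  have hlt : t/(M:ℝ) < 2 - t := (div_lt_iff₀ hM0).mpr (by linarith)
  linarith
end

section
/- Let (Item, ≤') be a linear order and assume every item a has a size s(a) ∈ (0,1]. For a finite set A of items with total size s(A) > 1, define o_A to be the ≤'-greatest element b of A such that s({a ∈ A : a >' b}) + s(b) > 1, and define GR(A) = {a ∈ A : a >' o_A}; for s(A) ≤ 1 define GR(A) = A. Then for finite sets B ⊆ A of items and any item d ∈ B, if d ∈ GR(A) then d ∈ GR(B). -/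
theorem stmt_10 {Item : Type*} [LinearOrder Item] (s : Item → ℝ)
    (hs : ∀ a : Item, 0 < s a ∧ s a ≤ 1)
    (A B : Finset Item) (hBA : B ⊆ A)
    (hA : 1 < ∑ a ∈ A, s a)
    (oA : Item)
    (hoA : IsGreatest {b : Item | b ∈ A ∧ 1 < (∑ a ∈ A.filter (fun a => b < a), s a) + s b} oA)
    (d : Item) (hdB : d ∈ B)
    (hd : d ∈ A.filter (fun a => oA < a)) :
    ((∑ a ∈ B, s a) ≤ 1 → d ∈ B) ∧
    (∀ oB : Item,
      IsGreatest {b : Item | b ∈ B ∧ 1 < (∑ a ∈ B.filter (fun a => b < a), s a) + s b} oB →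
      d ∈ B.filter (fun a => oB < a)) := by
  obtain ⟨hdA, hoAd⟩ := Finset.mem_filter.mp hd
  refine ⟨fun _ => hdB, fun oB hoB => ?_⟩
  obtain ⟨⟨hoBB, hoBsum⟩, _⟩ := hoB
  refine Finset.mem_filter.mpr ⟨hdB, ?_⟩
  by_contra hlt
  push_neg at hlt
  have hsum : (∑ a ∈ B.filter (fun a => oB < a), s a) ≤
      ∑ a ∈ A.filter (fun a => oB < a), s a := by
    apply Finset.sum_le_sum_of_subset_of_nonneg
    · exact Finset.filter_subset_filter _ hBA
    · exact fun a _ _ => (hs a).1.le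
  have hoBA : oB ∈ {b : Item | b ∈ A ∧
      1 < (∑ a ∈ A.filter (fun a => b < a), s a) + s b} :=
    ⟨hBA hoBB, lt_of_lt_of_le hoBsum (by linarith)⟩
  have := hoA.2 hoBA
  exact absurd (lt_of_lt_of_le hoAd hlt) (not_lt.mpr this)
end

section
/- In the setting of GREEDY above, suppose s(A) > 1. Then s(GR(A)) ≤ 1 and s(GR(A)) + s(o_A) > 1; in particular GR(A) is a feasible knapsack solution. -/
theorem stmt_12 {Item : Type*} [LinearOrder Item] (s : Item → ℝ)
    (hs : ∀ a : Item, 0 < s a ∧ s a ≤ 1)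
    (A : Finset Item) (hA : 1 < ∑ a ∈ A, s a) :
    (∃ b : Item,
      IsGreatest {b : Item | b ∈ A ∧ 1 < (∑ a ∈ A.filter (fun a => b < a), s a) + s b} b) ∧
    (∀ oA : Item,
      IsGreatest {b : Item | b ∈ A ∧ 1 < (∑ a ∈ A.filter (fun a => b < a), s a) + s b} oA →
      (∑ a ∈ A.filter (fun a => oA < a), s a) ≤ 1 ∧
      1 < (∑ a ∈ A.filter (fun a => oA < a), s a) + s oA) := by
  have hApos : A.Nonempty := by
    by_contra h
    rw [Finset.not_nonempty_iff_eq_empty] at h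
    simp [h] at hA
    linarith
  have hmin : A.min' hApos ∈ A := A.min'_mem hApos
  have hminP : 1 < (∑ a ∈ A.filter (fun a => A.min' hApos < a), s a) + s (A.min' hApos) := by
    have heq : A.filter (fun a => A.min' hApos < a) = A.erase (A.min' hApos) := by
      ext a
      simp only [Finset.mem_filter, Finset.mem_erase]
      constructor
      · rintro ⟨ha, hlt⟩; exact ⟨ne_of_gt hlt, ha⟩
      · rintro ⟨hne, ha⟩; exact ⟨ha, lt_of_le_of_ne (A.min'_le a ha) (Ne.symm hne)⟩
    rw [heq, Finset.sum_erase_add A s hmin]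
    exact hA
  set T := A.filter (fun b => 1 < (∑ a ∈ A.filter (fun a => b < a), s a) + s b) with hT
  have hTne : T.Nonempty := ⟨_, Finset.mem_filter.mpr ⟨hmin, hminP⟩⟩
  have hmaxT := T.max'_mem hTne
  refine ⟨⟨T.max' hTne, ?_, ?_⟩, ?_⟩
  · simpa [hT, Finset.mem_filter] using hmaxT
  · intro b hb
    exact T.le_max' b (Finset.mem_filter.mpr ⟨hb.1, hb.2⟩)
  · intro oA hoA
    refine ⟨?_, hoA.1.2⟩
    by_contra h
    push_neg at h
    set B := A.filter (fun a => oA < a) with hB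
    have hBne : B.Nonempty := by
      by_contra hb
      rw [Finset.not_nonempty_iff_eq_empty] at hb
      rw [hb] at h
      simp at h
      linarith
    set m := B.min' hBne with hm
    have hmB : m ∈ B := B.min'_mem hBne
    have hmA : m ∈ A := (Finset.mem_filter.mp hmB).1
    have hmgt : oA < m := (Finset.mem_filter.mp hmB).2
    have hfeq : A.filter (fun a => m < a) = B.erase m := by
      ext a
      simp only [Finset.mem_filter, Finset.mem_erase, hB]
      constructor
      · rintro ⟨ha, hlt⟩
        exact ⟨ne_of_gt hlt, ha, lt_trans hmgt hlt⟩
      · rintro ⟨hne, ha, hgt⟩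
        exact ⟨ha, lt_of_le_of_ne
          (B.min'_le a (hB ▸ Finset.mem_filter.mpr ⟨ha, hgt⟩)) (Ne.symm hne)⟩
    have hmS : 1 < (∑ a ∈ A.filter (fun a => m < a), s a) + s m := by
      rw [hfeq, Finset.sum_erase_add B s hmB]
      exact h
    exact absurd (hoA.2 ⟨hmA, hmS⟩) (not_le.mpr hmgt)
end
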